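/- arXiv:0903.0644 — 6 statements merged into one kernel-verified Lean document; each statement's English description precedes it below -/
import Mathlib

section
/- Suppose S_1, S_2 are polynomial solutions of the Lamé equation of the same degree k with Van Vleck parameters ν_1 < ν_2. Then between any two consecutive zeros of S_1 lying in the open interval (α_1, α_2), S_2 has a zero. -/
/-!
On `(a₁, a₂)` the weight `w = ∏ |t - aⱼ| ^ rⱼ` satisfies `w' A = w B`, so the Lamé equation
`A S'' + B S' = μ (t - ν) S` takes the Sturm–Liouville form `(w S')' = (w / A) μ (t - ν) S`,
with `w / A > 0` there. For two such solutions the Wronskian `w (S₁' S₂ - S₁ S₂')` has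
derivative `(w / A) μ (ν₂ - ν₁) S₁ S₂`. If `S₁, S₂ > 0` on `(x₁, x₂)` it is strictly increasing
on `[x₁, x₂]`, yet it is `≥ 0` at `x₁` and `≤ 0` at `x₂` because `S₁` vanishes there.
-/

open Polynomial Set

lemma HasDerivAt.nonneg_of_eq_zero_of_pos_Ioo {f : ℝ → ℝ} {f' a b : ℝ} (hf : HasDerivAt f f' a)
    (hab : a < b) (ha : f a = 0) (hpos : ∀ t ∈ Ioo a b, 0 < f t) : 0 ≤ f' := by
  refine ge_of_tendsto (hf.tendsto_slope.mono_left (nhdsGT_le_nhdsNE a)) ?_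
  filter_upwards [Ioo_mem_nhdsGT hab] with t ht
  rw [slope_def_field, ha, sub_zero]
  exact div_nonneg (hpos t ht).le (sub_nonneg.2 ht.1.le)

lemma HasDerivAt.nonpos_of_eq_zero_of_pos_Ioo {f : ℝ → ℝ} {f' a b : ℝ} (hf : HasDerivAt f f' b)
    (hab : a < b) (hb : f b = 0) (hpos : ∀ t ∈ Ioo a b, 0 < f t) : f' ≤ 0 := by
  refine le_of_tendsto (hf.tendsto_slope.mono_left (nhdsLT_le_nhdsNE b)) ?_
  filter_upwards [Ioo_mem_nhdsLT hab] with t ht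
  rw [slope_def_field, hb, sub_zero]
  exact div_nonpos_of_nonneg_of_nonpos (hpos t ht).le (sub_nonpos.2 ht.2.le)

def SolvesSturmLiouville (p q u u' : ℝ → ℝ) (s : Set ℝ) : Prop :=
  ∀ t ∈ s, HasDerivAt u (u' t) t ∧ HasDerivAt (fun x ↦ p x * u' x) (-(q t * u t)) t

namespace SolvesSturmLiouville

variable {p q q₁ q₂ u u' v v' : ℝ → ℝ} {s s' : Set ℝ} {x₁ x₂ : ℝ}

lemma mono (h : SolvesSturmLiouville p q u u' s) (hs : s' ⊆ s) :
    SolvesSturmLiouville p q u u' s' :=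
  fun x hx ↦ h x (hs hx)

lemma neg (h : SolvesSturmLiouville p q u u' s) : SolvesSturmLiouville p q (-u) (-u') s := by
  intro x hx
  refine ⟨(h x hx).1.neg, ?_⟩
  have hpu : (fun y ↦ p y * (-u') y) = -fun y ↦ p y * u' y := by
    funext y
    simp
  rw [hpu]
  exact (h x hx).2.neg.congr_deriv (by simp)

theorem exists_nonpos_of_pos (hu : SolvesSturmLiouville p q₁ u u' (Icc x₁ x₂))
    (hv : SolvesSturmLiouville p q₂ v v' (Icc x₁ x₂)) (hx : x₁ < x₂)
    (hp₁ : 0 ≤ p x₁) (hp₂ : 0 ≤ p x₂) (hq : ∀ t ∈ Ioo x₁ x₂, q₁ t < q₂ t)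
    (hu₁ : u x₁ = 0) (hu₂ : u x₂ = 0) (hu_pos : ∀ t ∈ Ioo x₁ x₂, 0 < u t) :
    ∃ y ∈ Ioo x₁ x₂, v y ≤ 0 := by
  by_contra! hv_pos
  have hx₁ : x₁ ∈ Icc x₁ x₂ := left_mem_Icc.2 hx.le
  have hx₂ : x₂ ∈ Icc x₁ x₂ := right_mem_Icc.2 hx.le
  set W : ℝ → ℝ := fun t ↦ p t * u' t * v t - u t * (p t * v' t)
  have hW : ∀ t ∈ Icc x₁ x₂, HasDerivAt W ((q₂ t - q₁ t) * u t * v t) t := fun t ht ↦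
    (((hu t ht).2.mul (hv t ht).1).sub ((hu t ht).1.mul (hv t ht).2)).congr_deriv (by ring)
  have hW_mono : StrictMonoOn W (Icc x₁ x₂) := by
    refine strictMonoOn_of_hasDerivWithinAt_pos (convex_Icc x₁ x₂)
      (fun t ht ↦ (hW t ht).continuousAt.continuousWithinAt)
      (fun t ht ↦ (hW t (interior_subset ht)).hasDerivWithinAt) fun t ht ↦ ?_
    rw [interior_Icc] at ht
    exact mul_pos (mul_pos (sub_pos.2 (hq t ht)) (hu_pos t ht)) (hv_pos t ht)
  have hv_nonneg : ∀ t ∈ Icc x₁ x₂, 0 ≤ v t := fun t ht ↦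
    ContinuousWithinAt.closure_le (by rwa [closure_Ioo hx.ne]) continuousWithinAt_const
      (hv t ht).1.continuousAt.continuousWithinAt fun y hy ↦ (hv_pos y hy).le
  have hW₁ : 0 ≤ W x₁ := by
    simp only [W, hu₁, zero_mul, sub_zero]
    exact mul_nonneg (mul_nonneg hp₁
      ((hu x₁ hx₁).1.nonneg_of_eq_zero_of_pos_Ioo hx hu₁ hu_pos)) (hv_nonneg x₁ hx₁)
  have hW₂ : W x₂ ≤ 0 := by
    simp only [W, hu₂, zero_mul, sub_zero]
    exact mul_nonpos_of_nonpos_of_nonneg (mul_nonpos_of_nonneg_of_nonpos hp₂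
      ((hu x₂ hx₂).1.nonpos_of_eq_zero_of_pos_Ioo hx hu₂ hu_pos)) (hv_nonneg x₂ hx₂)
  exact (hW_mono hx₁ hx₂ hx).not_ge (hW₂.trans hW₁)

theorem sturm_comparison (hu : SolvesSturmLiouville p q₁ u u' (Icc x₁ x₂))
    (hv : SolvesSturmLiouville p q₂ v v' (Icc x₁ x₂)) (hx : x₁ < x₂)
    (hp₁ : 0 ≤ p x₁) (hp₂ : 0 ≤ p x₂) (hq : ∀ t ∈ Ioo x₁ x₂, q₁ t < q₂ t)
    (hu₁ : u x₁ = 0) (hu₂ : u x₂ = 0) (hu_ne : ∀ t ∈ Ioo x₁ x₂, u t ≠ 0) :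
    ∃ y ∈ Ioo x₁ x₂, v y = 0 := by
  have hv_cont : ContinuousOn v (Ioo x₁ x₂) := fun t ht ↦
    (hv t (Ioo_subset_Icc_self ht)).1.continuousAt.continuousWithinAt
  have of_pos : ∀ {w w' : ℝ → ℝ}, SolvesSturmLiouville p q₁ w w' (Icc x₁ x₂) → w x₁ = 0 →
      w x₂ = 0 → (∀ t ∈ Ioo x₁ x₂, 0 < w t) → ∃ y ∈ Ioo x₁ x₂, v y = 0 := by
    intro w w' hw hw₁ hw₂ hw_pos
    obtain ⟨a, ha, hva⟩ := hw.exists_nonpos_of_pos hv hx hp₁ hp₂ hq hw₁ hw₂ hw_pos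
    obtain ⟨b, hb, hvb⟩ := hw.exists_nonpos_of_pos hv.neg hx hp₁ hp₂ hq hw₁ hw₂ hw_pos
    exact isPreconnected_Ioo.intermediate_value₂ ha hb hv_cont continuousOn_const hva
      (neg_nonpos.1 hvb)
  by_cases hu_pos : ∀ t ∈ Ioo x₁ x₂, 0 < u t
  · exact of_pos hu hu₁ hu₂ hu_pos
  push Not at hu_pos
  obtain ⟨s, hs, hus⟩ := hu_pos
  refine of_pos hu.neg (by simp [hu₁]) (by simp [hu₂]) fun t ht ↦ ?_
  by_contra! hut
  have hu_cont : ContinuousOn u (Ioo x₁ x₂) := fun t ht ↦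
    (hu t (Ioo_subset_Icc_self ht)).1.continuousAt.continuousWithinAt
  obtain ⟨z, hz, huz⟩ := isPreconnected_Ioo.intermediate_value₂ hs ht hu_cont
    continuousOn_const hus (by simpa using hut)
  exact hu_ne z hz huz

end SolvesSturmLiouville

noncomputable def lameA (a₁ a₂ a₃ : ℝ) : ℝ[X] := (X - C a₁) * (X - C a₂) * (X - C a₃)

noncomputable def lameB (a₁ a₂ a₃ r₁ r₂ r₃ : ℝ) : ℝ[X] :=
  C r₁ * ((X - C a₂) * (X - C a₃)) + C r₂ * ((X - C a₁) * (X - C a₃))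
    + C r₃ * ((X - C a₁) * (X - C a₂))

/-- Since `Real.log` is `log |·|`, this is `∏ |t - aⱼ| ^ rⱼ`, which satisfies `w' A = w B`
away from the `aⱼ`. -/
noncomputable def lameWeight (a₁ a₂ a₃ r₁ r₂ r₃ t : ℝ) : ℝ :=
  Real.exp (r₁ * Real.log (t - a₁) + r₂ * Real.log (t - a₂) + r₃ * Real.log (t - a₃))

section Lame

variable {a₁ a₂ a₃ r₁ r₂ r₃ t : ℝ}

lemma lameWeight_pos : 0 < lameWeight a₁ a₂ a₃ r₁ r₂ r₃ t := Real.exp_pos _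

lemma hasDerivAt_lameWeight (h₁ : t ≠ a₁) (h₂ : t ≠ a₂) (h₃ : t ≠ a₃) :
    HasDerivAt (lameWeight a₁ a₂ a₃ r₁ r₂ r₃)
      (lameWeight a₁ a₂ a₃ r₁ r₂ r₃ t * (r₁ / (t - a₁) + r₂ / (t - a₂) + r₃ / (t - a₃))) t := by
  have hlog : ∀ {a : ℝ}, t ≠ a → HasDerivAt (fun x ↦ Real.log (x - a)) (1 / (t - a)) t :=
    fun h ↦ by simpa using ((hasDerivAt_id t).sub_const _).log (sub_ne_zero.2 h)
  have := ((((hlog h₁).const_mul r₁).add ((hlog h₂).const_mul r₂)).add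
    ((hlog h₃).const_mul r₃)).exp
  exact this.congr_deriv (by simp only [lameWeight, Pi.add_apply, mul_one_div])

lemma eval_lameB (h₁ : t ≠ a₁) (h₂ : t ≠ a₂) (h₃ : t ≠ a₃) :
    (lameB a₁ a₂ a₃ r₁ r₂ r₃).eval t
      = (lameA a₁ a₂ a₃).eval t * (r₁ / (t - a₁) + r₂ / (t - a₂) + r₃ / (t - a₃)) := by
  have := sub_ne_zero.2 h₁
  have := sub_ne_zero.2 h₂
  have := sub_ne_zero.2 h₃
  simp only [lameA, lameB, eval_add, eval_mul, eval_sub, eval_X, eval_C]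
  field_simp

lemma solvesSturmLiouville_of_lame {S R : ℝ[X]}
    (hS : lameA a₁ a₂ a₃ * derivative (derivative S) + lameB a₁ a₂ a₃ r₁ r₂ r₃ * derivative S
      = R * S) :
    SolvesSturmLiouville (lameWeight a₁ a₂ a₃ r₁ r₂ r₃)
      (fun t ↦ -(lameWeight a₁ a₂ a₃ r₁ r₂ r₃ t / (lameA a₁ a₂ a₃).eval t * R.eval t))
      S.eval (derivative S).eval {a₁, a₂, a₃}ᶜ := by
  intro t ht
  simp only [mem_compl_iff, mem_insert_iff, mem_singleton_iff, not_or] at ht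
  obtain ⟨h₁, h₂, h₃⟩ := ht
  refine ⟨S.hasDerivAt t, ?_⟩
  have hA : (lameA a₁ a₂ a₃).eval t ≠ 0 := by
    simp only [lameA, eval_mul, eval_sub, eval_X, eval_C]
    exact mul_ne_zero (mul_ne_zero (sub_ne_zero.2 h₁) (sub_ne_zero.2 h₂)) (sub_ne_zero.2 h₃)
  have hSt := congrArg (eval t) hS
  rw [eval_add, eval_mul, eval_mul, eval_mul, eval_lameB h₁ h₂ h₃] at hSt
  refine ((hasDerivAt_lameWeight h₁ h₂ h₃).mul ((derivative S).hasDerivAt t)).congr_deriv ?_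
  beta_reduce
  rw [neg_mul, neg_neg, mul_assoc (_ / _), ← hSt]
  generalize (lameA a₁ a₂ a₃).eval t = A at hA ⊢
  field_simp
  ring

end Lame

theorem stmt_3_general (a1 a2 a3 r1 r2 r3 μ ν1 ν2 : ℝ)
    (h23 : a2 < a3)
    (hr1 : 0 < r1) (hr2 : 0 < r2) (hr3 : 0 < r3)
    (k : ℕ) (hk : 1 ≤ k) (hμ : μ = (k : ℝ) * ((k : ℝ) - 1 + r1 + r2 + r3))
    (S1 S2 : Polynomial ℝ)
    (hode1 : ((X - C a1) * (X - C a2) * (X - C a3)) * S1.derivative.derivative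
        + (C r1 * ((X - C a2) * (X - C a3)) + C r2 * ((X - C a1) * (X - C a3))
            + C r3 * ((X - C a1) * (X - C a2))) * S1.derivative
        = C μ * (X - C ν1) * S1)
    (hode2 : ((X - C a1) * (X - C a2) * (X - C a3)) * S2.derivative.derivative
        + (C r1 * ((X - C a2) * (X - C a3)) + C r2 * ((X - C a1) * (X - C a3))
            + C r3 * ((X - C a1) * (X - C a2))) * S2.derivative
        = C μ * (X - C ν2) * S2)
    (hν : ν1 < ν2)
    (x1 x2 : ℝ) (hx1 : a1 < x1) (hx12 : x1 < x2) (hx2 : x2 < a2)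
    (hz1 : S1.eval x1 = 0) (hz2 : S1.eval x2 = 0)
    (hconsec : ∀ t ∈ Ioo x1 x2, S1.eval t ≠ 0) :
    ∃ y ∈ Ioo x1 x2, S2.eval y = 0 := by
  have hμ_pos : 0 < μ := by
    have : (1 : ℝ) ≤ k := by exact_mod_cast hk
    rw [hμ]
    exact mul_pos (by linarith) (by linarith)
  have hregular : Icc x1 x2 ⊆ {a1, a2, a3}ᶜ := by
    rintro t ⟨ht1, ht2⟩
    simp only [mem_compl_iff, mem_insert_iff, mem_singleton_iff, not_or]
    exact ⟨by linarith, by linarith, by linarith⟩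
  refine SolvesSturmLiouville.sturm_comparison ((solvesSturmLiouville_of_lame hode1).mono hregular)
    ((solvesSturmLiouville_of_lame hode2).mono hregular) hx12 lameWeight_pos.le
    lameWeight_pos.le (fun t ⟨ht1, ht2⟩ ↦ ?_) hz1 hz2 hconsec
  have hA : 0 < (lameA a1 a2 a3).eval t := by
    simp only [lameA, eval_mul, eval_sub, eval_X, eval_C]
    exact mul_pos_of_neg_of_neg (mul_neg_of_pos_of_neg (by linarith) (by linarith)) (by linarith)
  simp only [eval_mul, eval_sub, eval_X, eval_C, neg_lt_neg_iff]
  exact mul_lt_mul_of_pos_left (mul_lt_mul_of_pos_left (by linarith) hμ_pos)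
    (div_pos lameWeight_pos hA)

/-- Sturm comparison: between two consecutive zeros of `S₁` in `(α₁, α₂)` there is a
zero of `S₂`, when `S₁, S₂` are degree-`k` Stieltjes polynomials with Van Vleck
parameters `ν₁ < ν₂`. -/
theorem stmt_3 (a1 a2 a3 r1 r2 r3 μ ν1 ν2 : ℝ)
    (h12 : a1 < a2) (h23 : a2 < a3)
    (hr1 : 0 < r1) (hr2 : 0 < r2) (hr3 : 0 < r3)
    (k : ℕ) (hk : 1 ≤ k) (hμ : μ = (k : ℝ) * ((k : ℝ) - 1 + r1 + r2 + r3))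
    (S1 S2 : Polynomial ℝ)
    (hd1 : S1.natDegree = k) (hd2 : S2.natDegree = k)
    (hode1 : ((X - C a1) * (X - C a2) * (X - C a3)) * S1.derivative.derivative
        + (C r1 * ((X - C a2) * (X - C a3)) + C r2 * ((X - C a1) * (X - C a3))
            + C r3 * ((X - C a1) * (X - C a2))) * S1.derivative
        = C μ * (X - C ν1) * S1)
    (hode2 : ((X - C a1) * (X - C a2) * (X - C a3)) * S2.derivative.derivative
        + (C r1 * ((X - C a2) * (X - C a3)) + C r2 * ((X - C a1) * (X - C a3))
            + C r3 * ((X - C a1) * (X - C a2))) * S2.derivative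
        = C μ * (X - C ν2) * S2)
    (hsimple1 : ∀ t : ℝ, S1.eval t = 0 → S1.derivative.eval t ≠ 0)
    (hsimple2 : ∀ t : ℝ, S2.eval t = 0 → S2.derivative.eval t ≠ 0)
    (hloc1 : ∀ t : ℝ, S1.eval t = 0 → t ∈ Ioo a1 a3)
    (hloc2 : ∀ t : ℝ, S2.eval t = 0 → t ∈ Ioo a1 a3)
    (hν : ν1 < ν2)
    (x1 x2 : ℝ) (hx1 : a1 < x1) (hx12 : x1 < x2) (hx2 : x2 < a2)
    (hz1 : S1.eval x1 = 0) (hz2 : S1.eval x2 = 0)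
    (hconsec : ∀ t ∈ Ioo x1 x2, S1.eval t ≠ 0) :
    ∃ y ∈ Ioo x1 x2, S2.eval y = 0 :=
  stmt_3_general a1 a2 a3 r1 r2 r3 μ ν1 ν2 h23 hr1 hr2 hr3 k hk hμ S1 S2 hode1 hode2 hν x1 x2 hx1
    hx12 hx2 hz1 hz2 hconsec
end

section
/- Let S be a polynomial solution of the Lamé equation with Van Vleck parameter ν. If all zeros of S are real and simple, and between every zero of S and ν there lies either a zero of S' or the point α_2, then S has no zero strictly between α_2 and ν. -/
open Polynomial Set

/-!
For a polynomial `f` with only real zeros, `f' / f = ∑ 1 / (t - r)` over the zeros `r`, so a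
critical point that is not a zero has zeros on its right, and any two such critical points are
separated by a zero. Suppose `a < ν` and some zero lies in `(a, ν)`. Shah's condition at the zero
`x` nearest to `ν` from below gives a critical point in `(x, ν)`; hence there are zeros above `ν`,
and Shah's condition at the nearest one `w` gives a second critical point in `(ν, w)`. These two
critical points are not separated by a zero. The case `ν < a` follows by the reflection `t ↦ -t`.
-/

theorem Set.neg_mem_uIoo_neg_iff {α : Type*} [AddCommGroup α] [LinearOrder α]
    [IsOrderedAddMonoid α] {a b x : α} : -x ∈ uIoo (-a) (-b) ↔ x ∈ uIoo a b := by
  simp only [uIoo, mem_Ioo, ← neg_sup, ← neg_inf, neg_lt_neg_iff, and_comm]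

namespace Polynomial.Splits

variable {f : ℝ[X]}

theorem exists_root_gt_of_derivative_eq_zero (hf : f.Splits) (h0 : f.roots ≠ 0) {t : ℝ}
    (ht : f.eval t ≠ 0) (h't : f.derivative.eval t = 0) : ∃ r ∈ f.roots, t < r := by
  by_contra! hle
  have hpos : (f.roots.map fun _ ↦ (0 : ℝ)).sum < (f.roots.map fun z ↦ 1 / (t - z)).sum :=
    Multiset.sum_lt_sum_of_nonempty h0 fun z hz ↦ one_div_pos.2 <| sub_pos.2 <|
      (hle z hz).lt_of_ne fun h ↦ ht (h ▸ isRoot_of_mem_roots hz)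
  rw [← hf.eval_derivative_div_eval_of_ne_zero ht, h't] at hpos
  simp at hpos

theorem exists_root_mem_Ioo_of_derivative_eq_zero (hf : f.Splits) (h0 : f.roots ≠ 0) {s t : ℝ}
    (hst : s < t) (hs : f.eval s ≠ 0) (ht : f.eval t ≠ 0)
    (h's : f.derivative.eval s = 0) (h't : f.derivative.eval t = 0) :
    ∃ r ∈ f.roots, r ∈ Ioo s t := by
  by_contra! hout
  have hlt : (f.roots.map fun z ↦ 1 / (t - z)).sum < (f.roots.map fun z ↦ 1 / (s - z)).sum := by
    refine Multiset.sum_lt_sum_of_nonempty h0 fun z hz ↦ ?_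
    have hzs : z ≠ s := fun h ↦ hs (h ▸ isRoot_of_mem_roots hz)
    have hzt : z ≠ t := fun h ↦ ht (h ▸ isRoot_of_mem_roots hz)
    rcases lt_or_gt_of_ne hzs with hzs | hzs
    · exact one_div_lt_one_div_of_lt (by linarith) (by linarith)
    · have htz : t < z := (not_lt.1 fun h ↦ hout z hz ⟨hzs, h⟩).lt_of_ne' hzt
      exact one_div_lt_one_div_of_neg_of_lt (by linarith) (by linarith)
  rw [← hf.eval_derivative_div_eval_of_ne_zero hs, ← hf.eval_derivative_div_eval_of_ne_zero ht,
    h's, h't] at hlt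
  simp at hlt

end Polynomial.Splits

def ShahCondition (f : ℝ[X]) (a ν : ℝ) : Prop :=
  ∀ x, f.eval x = 0 → ∃ y ∈ uIoo x ν, f.derivative.eval y = 0 ∨ y = a

namespace ShahCondition

variable {f : ℝ[X]} {a ν z : ℝ}

theorem comp_neg_X (h : ShahCondition f a ν) : ShahCondition (f.comp (-X)) (-a) (-ν) := by
  intro x hx
  obtain ⟨y, hy, hy'⟩ := h (-x) (by simpa [eval_comp] using hx)
  refine ⟨-y, by simpa using neg_mem_uIoo_neg_iff.2 hy, ?_⟩
  rcases hy' with hy' | rfl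
  · left
    simp [derivative_comp, eval_comp, hy']
  · right
    rfl

theorem exists_critical_point (h : ShahCondition f a ν) {x : ℝ} (hx : f.eval x = 0)
    (ha : a ∉ uIoo x ν) (hgap : ∀ r ∈ uIoo x ν, f.eval r ≠ 0) :
    ∃ y ∈ uIoo x ν, f.eval y ≠ 0 ∧ f.derivative.eval y = 0 := by
  obtain ⟨y, hy, hy'⟩ := h x hx
  exact ⟨y, hy, hgap y hy, hy'.resolve_right fun hya ↦ ha (hya ▸ hy)⟩

theorem eval_ne_zero_of_mem_Ioo (hf : f.Splits) (hν : f.eval ν ≠ 0) (h : ShahCondition f a ν)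
    (hz : z ∈ Ioo a ν) : f.eval z ≠ 0 := by
  intro hz0
  have hf0 : f ≠ 0 := by rintro rfl; simp at hν
  have hroots : f.roots ≠ 0 := by
    intro h0
    simpa [h0] using (mem_roots hf0).2 hz0
  have hfin := finite_setOfPred_isRoot hf0
  obtain ⟨x, ⟨hx, hxν⟩, hxmax⟩ := exists_max_image {x | f.IsRoot x ∧ x < ν} id
    (hfin.subset fun _ h ↦ h.1) ⟨z, hz0, hz.2⟩
  have hax : a < x := hz.1.trans_le (hxmax z ⟨hz0, hz.2⟩)
  obtain ⟨y, hy, hy0, hdy⟩ := h.exists_critical_point hx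
    (by rw [uIoo_of_lt hxν]; exact fun ha ↦ lt_asymm ha.1 hax)
    (fun r hr h0 ↦ by rw [uIoo_of_lt hxν] at hr; exact (hxmax r ⟨h0, hr.2⟩).not_gt hr.1)
  rw [uIoo_of_lt hxν] at hy
  obtain ⟨r, hr, hyr⟩ := hf.exists_root_gt_of_derivative_eq_zero hroots hy0 hdy
  replace hr := isRoot_of_mem_roots hr
  have hνr : ν < r := by
    by_contra! hrν
    rcases hrν.lt_or_eq with hrν | rfl
    · exact (hxmax r ⟨hr, hrν⟩).not_gt (hy.1.trans hyr)
    · exact hν hr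
  obtain ⟨w, ⟨hw, hνw⟩, hwmin⟩ := exists_min_image {x | f.IsRoot x ∧ ν < x} id
    (hfin.subset fun _ h ↦ h.1) ⟨r, hr, hνr⟩
  obtain ⟨y', hy', hy'0, hdy'⟩ := h.exists_critical_point hw
    (by rw [uIoo_of_gt hνw]; exact fun ha ↦ lt_asymm ha.1 (hz.1.trans hz.2))
    (fun r hr h0 ↦ by rw [uIoo_of_gt hνw] at hr; exact (hwmin r ⟨h0, hr.1⟩).not_gt hr.2)
  rw [uIoo_of_gt hνw] at hy'
  obtain ⟨s, hs, hys, hsy'⟩ := hf.exists_root_mem_Ioo_of_derivative_eq_zero hroots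
    (hy.2.trans hy'.1) hy0 hy'0 hdy hdy'
  replace hs := isRoot_of_mem_roots hs
  rcases lt_trichotomy s ν with hsν | rfl | hνs
  · exact (hxmax s ⟨hs, hsν⟩).not_gt (hy.1.trans hys)
  · exact hν hs
  · exact (hwmin s ⟨hs, hνs⟩).not_gt (hsy'.trans hy'.2)

theorem eval_ne_zero_of_mem_uIoo (hf : f.Splits) (hν : f.eval ν ≠ 0) (h : ShahCondition f a ν)
    (hz : z ∈ uIoo a ν) : f.eval z ≠ 0 := by
  rcases lt_trichotomy a ν with hlt | rfl | hgt
  · rw [uIoo_of_lt hlt] at hz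
    exact h.eval_ne_zero_of_mem_Ioo hf hν hz
  · simp at hz
  · have hz' := neg_mem_uIoo_neg_iff.2 hz
    rw [uIoo_of_lt (neg_lt_neg hgt)] at hz'
    simpa [eval_comp] using
      h.comp_neg_X.eval_ne_zero_of_mem_Ioo hf.comp_neg_X (by simpa [eval_comp] using hν) hz'

end ShahCondition

theorem stmt_5_general (a2 ν : ℝ)
    (S : Polynomial ℝ)
    (hreal : S.roots.card = S.natDegree)
    (hzν : ∀ x : ℝ, S.eval x = 0 → x ≠ ν)
    (hShah : ∀ x : ℝ, S.eval x = 0 →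
      ∃ y ∈ Ioo (min x ν) (max x ν), S.derivative.eval y = 0 ∨ y = a2) :
    ∀ x : ℝ, S.eval x = 0 → x ∉ Ioo (min a2 ν) (max a2 ν) :=
  fun _ hx hmem ↦ ShahCondition.eval_ne_zero_of_mem_uIoo (splits_iff_card_roots.2 hreal)
    (fun h ↦ hzν ν h rfl) hShah hmem hx

/-- If all zeros of `S` are real and simple, and between every zero of `S` and `ν`
there lies either a zero of `S'` or the point `α₂`, then `S` has no zero strictly
between `α₂` and `ν`. -/
theorem stmt_5 (a1 a2 a3 ν : ℝ)
    (h12 : a1 < a2) (h23 : a2 < a3)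
    (hν : ν ∈ Ioo a1 a3) (hνa2 : ν ≠ a2)
    (S : Polynomial ℝ) (hS0 : S ≠ 0)
    (hreal : S.roots.card = S.natDegree)
    (hsimple : ∀ x : ℝ, S.eval x = 0 → S.derivative.eval x ≠ 0)
    (hloc : ∀ x : ℝ, S.eval x = 0 → x ∈ Ioo a1 a3)
    (hza2 : ∀ x : ℝ, S.eval x = 0 → x ≠ a2)
    (hzν : ∀ x : ℝ, S.eval x = 0 → x ≠ ν)
    (hShah : ∀ x : ℝ, S.eval x = 0 →
      ∃ y ∈ Ioo (min x ν) (max x ν), S.derivative.eval y = 0 ∨ y = a2) :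
    ∀ x : ℝ, S.eval x = 0 → x ∉ Ioo (min a2 ν) (max a2 ν) :=
  stmt_5_general a2 ν S hreal hzν hShah
end

section
/- Let f and g be real polynomials of the same degree k, all of whose zeros are simple and lie in (α_1, α_3) \ {α_2}. Suppose: (a) between any two consecutive zeros of f in (α_1,α_2), and between any zero of f in (α_1,α_2) and either endpoint α_1, α_2, there is a zero of g; and (b) f has exactly m zeros in (α_1,α_2) and g has exactly m+1 zeros in (α_1,α_2); and symmetrically (c) between any two consecutive zeros of g in (α_2,α_3), and between any zero of g in (α_2,α_3) and either endpoint α_2, α_3, there is a zero of f. Then the zeros of f and g strictly interlace: writing the zeros of f as x_1 < ... < x_k and those of g as y_1 < ... < y_k, one has y_1 < x_1 < y_2 < x_2 < ... < y_k < x_k. -/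
/-!
On `(α₁, α₂)` the `m` zeros of `f` cut the interval into `m + 1` gaps, each containing a zero
of `g`. Chasing the gaps upwards gives `yᵢ < xᵢ`: the zero of `g` in the gap below `xᵢ` has index
at least `i`. Chasing them downwards from `α₂` gives `xᵢ < yᵢ₊₁`, and here the count enters: the
zero of `g` in the last gap is one of `y₀, …, yₘ`. On `(α₂, α₃)` the same argument applies with
`f` and `g` exchanged, to the zeros `yₘ₊₁, …, y_{k-1}` of `g` and `xₘ, …, x_{k-1}` of `f`, and
the two blocks are joined by `yₘ < α₂ < xₘ`.
-/

open Polynomial Set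

theorem Set.inter_eq_range_comp {ι κ α : Type*} {s I : Set α} {z : ι → α} {e : κ → ι}
    (hs : s = range z) (he : z ⁻¹' I = range e) : s ∩ I = range (z ∘ e) := by
  rw [hs, ← image_preimage_eq_range_inter, he, range_comp]

theorem Fin.range_natAdd_comp_succ (m n : ℕ) :
    range (Fin.natAdd m ∘ Fin.succ : Fin n → Fin (m + (n + 1))) =
      {i : Fin (m + (n + 1)) | m + 1 ≤ (i : ℕ)} := by
  ext i
  simp only [mem_range, Function.comp_apply, Fin.ext_iff, Fin.val_natAdd, Fin.val_succ,
    mem_ofPred_eq]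
  exact ⟨fun ⟨j, hj⟩ => by omega, fun h => ⟨⟨i - (m + 1), by omega⟩, by simp only; omega⟩⟩

section
variable {α : Type*} [LinearOrder α]

theorem StrictMono.lt_iff_lt_card_filter {k : ℕ} {z : Fin k → α} (hz : StrictMono z) (t : α)
    (i : Fin k) : z i < t ↔ (i : ℕ) < (Finset.univ.filter fun j => z j < t).card := by
  constructor
  · intro hit
    calc (i : ℕ) < (Finset.Iic i).card := by simp
      _ ≤ _ := Finset.card_le_card fun j hj => by
        simpa using (hz.monotone (Finset.mem_Iic.1 hj)).trans_lt hit
  · intro hi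
    by_contra! hti
    have : (Finset.univ.filter fun j => z j < t).card ≤ (Finset.Iio i).card :=
      Finset.card_le_card fun j hj => by
        simpa [hz.lt_iff_lt] using (Finset.mem_filter.1 hj).2.trans_le hti
    simp only [Fin.card_Iio] at this
    omega

theorem StrictMono.mem_Ioo_iff_of_card {k m : ℕ} {z : Fin k → α} {a b c : α} (hz : StrictMono z)
    (hloc : ∀ i, z i ∈ Ioo a b ∪ Ioo b c)
    (hcard : (Finset.univ.filter fun i => z i ∈ Ioo a b).card = m) (i : Fin k) :
    (z i ∈ Ioo a b ↔ (i : ℕ) < m) ∧ (z i ∈ Ioo b c ↔ m ≤ (i : ℕ)) := by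
  have mem_left : ∀ j, z j ∈ Ioo a b ↔ z j < b := fun j =>
    ⟨And.right, fun h => (hloc j).resolve_right fun h' => h'.1.not_gt h⟩
  have mem_right : z i ∈ Ioo b c ↔ ¬ z i < b :=
    ⟨fun h => h.1.not_gt, fun h => (hloc i).resolve_left fun h' => h h'.2⟩
  have hcard' : (Finset.univ.filter fun j => z j < b).card = m := by
    simpa only [mem_left] using hcard
  rw [mem_right, mem_left, hz.lt_iff_lt_card_filter, hcard', not_lt]
  exact ⟨Iff.rfl, Iff.rfl⟩

theorem interlace_of_separation {F G : Set α} {a b : α} {n : ℕ} {p : Fin (n + 1) → α}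
    {q : Fin n → α} (hp : StrictMono p) (hq : StrictMono q) (hF : F ∩ Ioo a b = range q)
    (hG : G ∩ Ioo a b ⊆ range p)
    (hsep : ∀ u v, u ∈ F → v ∈ F → u ∈ Ioo a b → v ∈ Ioo a b → u < v →
      (∀ t ∈ Ioo u v, t ∉ F) → ∃ w ∈ Ioo u v, w ∈ G)
    (hsep' : ∀ u, u ∈ F → u ∈ Ioo a b → (∃ w ∈ Ioo a u, w ∈ G) ∧ ∃ w ∈ Ioo u b, w ∈ G)
    (i : Fin n) : p i.castSucc < q i ∧ q i < p i.succ := by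
  obtain _ | n := n
  · exact i.elim0
  have hqF : ∀ i, q i ∈ F ∩ Ioo a b := fun i => hF ▸ mem_range_self i
  have below : ∃ j, p j < q 0 := by
    obtain ⟨⟨w, hw, hwG⟩, -⟩ := hsep' _ (hqF 0).1 (hqF 0).2
    obtain ⟨j, rfl⟩ := hG ⟨hwG, hw.1, hw.2.trans (hqF 0).2.2⟩
    exact ⟨j, hw.2⟩
  have above : ∃ j, q (Fin.last n) < p j := by
    obtain ⟨-, ⟨w, hw, hwG⟩⟩ := hsep' _ (hqF _).1 (hqF _).2
    obtain ⟨j, rfl⟩ := hG ⟨hwG, (hqF _).2.1.trans hw.1, hw.2⟩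
    exact ⟨j, hw.1⟩
  have between : ∀ i : Fin n, ∃ j, p j ∈ Ioo (q i.castSucc) (q i.succ) := by
    intro i
    have gap : ∀ t ∈ Ioo (q i.castSucc) (q i.succ), t ∉ F := by
      rintro t ht htF
      obtain ⟨l, rfl⟩ : t ∈ range q :=
        hF ▸ ⟨htF, (hqF _).2.1.trans ht.1, ht.2.trans (hqF _).2.2⟩
      rw [mem_Ioo, hq.lt_iff_lt, hq.lt_iff_lt, Fin.castSucc_lt_iff_succ_le] at ht
      exact ht.1.not_gt ht.2
    obtain ⟨w, hw, hwG⟩ := hsep _ _ (hqF _).1 (hqF _).1 (hqF _).2 (hqF _).2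
      (hq Fin.castSucc_lt_succ) gap
    obtain ⟨j, rfl⟩ := hG ⟨hwG, (hqF _).2.1.trans hw.1, hw.2.trans (hqF _).2.2⟩
    exact ⟨j, hw⟩
  constructor
  · induction i using Fin.induction with
    | zero =>
      obtain ⟨j, hj⟩ := below
      exact (hp.monotone (Fin.zero_le j)).trans_lt hj
    | succ i ih =>
      obtain ⟨j, hj⟩ := between i
      have : i.castSucc.castSucc < j := hp.lt_iff_lt.1 (ih.trans hj.1)
      exact (hp.monotone (Fin.castSucc_lt_iff_succ_le.1 this)).trans_lt hj.2
  · induction i using Fin.reverseInduction with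
    | last =>
      obtain ⟨j, hj⟩ := above
      exact hj.trans_le (hp.monotone (Fin.le_last j))
    | cast i ih =>
      obtain ⟨j, hj⟩ := between i
      have : j < i.succ.succ := hp.lt_iff_lt.1 (hj.2.trans ih)
      exact hj.1.trans_le (hp.monotone (Fin.le_castSucc_iff.2 this))

end

theorem stmt_6_general (a1 a2 a3 : ℝ)
    (k m : ℕ) (f g : Polynomial ℝ)
    (x y : Fin k → ℝ) (hx : StrictMono x) (hy : StrictMono y)
    (hxz : ∀ i, f.eval (x i) = 0) (hxall : ∀ t : ℝ, f.eval t = 0 → ∃ i, t = x i)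
    (hyz : ∀ i, g.eval (y i) = 0) (hyall : ∀ t : ℝ, g.eval t = 0 → ∃ i, t = y i)
    (hxloc : ∀ i, x i ∈ Ioo a1 a2 ∪ Ioo a2 a3)
    (hyloc : ∀ i, y i ∈ Ioo a1 a2 ∪ Ioo a2 a3)
    -- (a): g separates consecutive zeros of f in (α₁,α₂) and from both endpoints
    (ha : ∀ u v : ℝ, f.eval u = 0 → f.eval v = 0 → u ∈ Ioo a1 a2 → v ∈ Ioo a1 a2 →
      u < v → (∀ t ∈ Ioo u v, f.eval t ≠ 0) → ∃ w ∈ Ioo u v, g.eval w = 0)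
    (ha' : ∀ u : ℝ, f.eval u = 0 → u ∈ Ioo a1 a2 →
      (∃ w ∈ Ioo a1 u, g.eval w = 0) ∧ (∃ w ∈ Ioo u a2, g.eval w = 0))
    -- (b): zero counts in (α₁,α₂)
    (hb : (Finset.univ.filter (fun i => x i ∈ Ioo a1 a2)).card = m)
    (hb' : (Finset.univ.filter (fun i => y i ∈ Ioo a1 a2)).card = m + 1)
    -- (c): f separates consecutive zeros of g in (α₂,α₃) and from both endpoints
    (hc : ∀ u v : ℝ, g.eval u = 0 → g.eval v = 0 → u ∈ Ioo a2 a3 → v ∈ Ioo a2 a3 →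
      u < v → (∀ t ∈ Ioo u v, g.eval t ≠ 0) → ∃ w ∈ Ioo u v, f.eval w = 0)
    (hc' : ∀ u : ℝ, g.eval u = 0 → u ∈ Ioo a2 a3 →
      (∃ w ∈ Ioo a2 u, f.eval w = 0) ∧ (∃ w ∈ Ioo u a3, f.eval w = 0)) :
    ∀ i : Fin k, y i < x i ∧ ∀ (h : (i : ℕ) + 1 < k), x i < y ⟨(i : ℕ) + 1, h⟩ := by
  have hxm := hx.mem_Ioo_iff_of_card hxloc hb
  have hym := hy.mem_Ioo_iff_of_card hyloc hb'
  have hmk : m + 1 ≤ k := by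
    simpa only [hb', Fintype.card_fin] using
      Finset.card_le_univ (Finset.univ.filter fun i => y i ∈ Ioo a1 a2)
  obtain ⟨n, rfl⟩ : ∃ n, k = m + (n + 1) := ⟨k - (m + 1), by omega⟩
  have hf : {t | f.eval t = 0} = range x :=
    ((range_eq_iff x _).2 ⟨hxz, fun t ht => (hxall t ht).imp fun _ => Eq.symm⟩).symm
  have hg : {t | g.eval t = 0} = range y :=
    ((range_eq_iff y _).2 ⟨hyz, fun t ht => (hyall t ht).imp fun _ => Eq.symm⟩).symm
  have hleft := interlace_of_separation (F := {t | f.eval t = 0}) (G := {t | g.eval t = 0})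
    (hy.comp (Fin.strictMono_castLE hmk)) (hx.comp (Fin.strictMono_castLE (by omega : m ≤ _)))
    (inter_eq_range_comp hf (by rw [Fin.range_castLE]; exact ext fun i => (hxm i).1))
    (inter_eq_range_comp hg (by rw [Fin.range_castLE]; exact ext fun i => (hym i).1)).le
    ha ha'
  have hright := interlace_of_separation (F := {t | g.eval t = 0}) (G := {t | f.eval t = 0})
    (hx.comp (Fin.strictMono_natAdd m))
    (hy.comp ((Fin.strictMono_natAdd m).comp Fin.strictMono_succ))
    (inter_eq_range_comp hg (by rw [Fin.range_natAdd_comp_succ]; exact ext fun i => (hym i).2))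
    (inter_eq_range_comp hf (by rw [Fin.range_natAdd]; exact ext fun i => (hxm i).2)).le
    hc hc'
  -- The blocks index `x` and `y` by `castLE` and `natAdd m`, so their conclusions are the goal
  -- up to definitional unfolding of the indices.
  rintro ⟨i, hi⟩
  rcases lt_or_ge i m with h | h
  · exact ⟨(hleft ⟨i, h⟩).1, fun _ => (hleft ⟨i, h⟩).2⟩
  obtain ⟨j, rfl⟩ := Nat.exists_eq_add_of_le h
  refine ⟨?_, fun h' => (hright ⟨j, by simp only at h'; omega⟩).1⟩
  cases j with
  | zero => exact ((hym _).1.2 (by simp)).2.trans ((hxm _).2.2 (by simp)).1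
  | succ j => exact (hright ⟨j, by omega⟩).2

/-- Combinatorial interlacing step: if `f` and `g` are degree-`k` polynomials with
simple zeros in `(α₁,α₂) ∪ (α₂,α₃)`, `g` separates the zeros of `f` in `(α₁,α₂)`
(including from the endpoints), `f` separates the zeros of `g` in `(α₂,α₃)`
(including from the endpoints), and `f` has `m` zeros while `g` has `m+1` zeros
in `(α₁,α₂)`, then the zeros strictly interlace: `y₁ < x₁ < y₂ < ⋯ < y_k < x_k`. -/
theorem stmt_6 (a1 a2 a3 : ℝ) (h12 : a1 < a2) (h23 : a2 < a3)
    (k m : ℕ) (f g : Polynomial ℝ)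
    (hfd : f.natDegree = k) (hgd : g.natDegree = k)
    (x y : Fin k → ℝ) (hx : StrictMono x) (hy : StrictMono y)
    (hxz : ∀ i, f.eval (x i) = 0) (hxall : ∀ t : ℝ, f.eval t = 0 → ∃ i, t = x i)
    (hyz : ∀ i, g.eval (y i) = 0) (hyall : ∀ t : ℝ, g.eval t = 0 → ∃ i, t = y i)
    (hxloc : ∀ i, x i ∈ Ioo a1 a2 ∪ Ioo a2 a3)
    (hyloc : ∀ i, y i ∈ Ioo a1 a2 ∪ Ioo a2 a3)
    -- (a): g separates consecutive zeros of f in (α₁,α₂) and from both endpoints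
    (ha : ∀ u v : ℝ, f.eval u = 0 → f.eval v = 0 → u ∈ Ioo a1 a2 → v ∈ Ioo a1 a2 →
      u < v → (∀ t ∈ Ioo u v, f.eval t ≠ 0) → ∃ w ∈ Ioo u v, g.eval w = 0)
    (ha' : ∀ u : ℝ, f.eval u = 0 → u ∈ Ioo a1 a2 →
      (∃ w ∈ Ioo a1 u, g.eval w = 0) ∧ (∃ w ∈ Ioo u a2, g.eval w = 0))
    -- (b): zero counts in (α₁,α₂)
    (hb : (Finset.univ.filter (fun i => x i ∈ Ioo a1 a2)).card = m)
    (hb' : (Finset.univ.filter (fun i => y i ∈ Ioo a1 a2)).card = m + 1)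
    -- (c): f separates consecutive zeros of g in (α₂,α₃) and from both endpoints
    (hc : ∀ u v : ℝ, g.eval u = 0 → g.eval v = 0 → u ∈ Ioo a2 a3 → v ∈ Ioo a2 a3 →
      u < v → (∀ t ∈ Ioo u v, g.eval t ≠ 0) → ∃ w ∈ Ioo u v, f.eval w = 0)
    (hc' : ∀ u : ℝ, g.eval u = 0 → u ∈ Ioo a2 a3 →
      (∃ w ∈ Ioo a2 u, f.eval w = 0) ∧ (∃ w ∈ Ioo u a3, f.eval w = 0)) :
    ∀ i : Fin k, y i < x i ∧ ∀ (h : (i : ℕ) + 1 < k), x i < y ⟨(i : ℕ) + 1, h⟩ :=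
  stmt_6_general a1 a2 a3 k m f g x y hx hy hxz hxall hyz hyall hxloc hyloc ha ha' hb hb' hc hc'
end

section
/- Let S be a polynomial solution of degree k of the Lamé equation with parameter ν_k, and S̃ a polynomial solution of degree k+1 with parameter ν_{k+1}, and let μ_k = k(k-1+σ), μ_{k+1} = (k+1)(k+σ) with σ = ρ_1+ρ_2+ρ_3. Then on any interval avoiding α_1, α_2, α_3, with J(x) = ∏_j |x-α_j|^{ρ_j}: d/dx [ J(x)(S̃'(x)S(x) − S̃(x)S'(x)) ] = (μ_{k+1} − μ_k)(J(x)/A(x))(x − ν̂) S(x) S̃(x), where ν̂ = (μ_{k+1} ν_{k+1} − μ_k ν_k)/(μ_{k+1} − μ_k). -/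
/-!
The weight `J = ∏ |x - αⱼ|^ρⱼ` satisfies `J'/J = Σ ρⱼ/(x - αⱼ)`, so it is an integrating factor
that puts both Lamé equations in the self-adjoint form `(J y')' = J (μ (x - ν)/A) y`. Abel's
identity then gives `(J (S̃' S - S̃ S'))' = J (μ_{k+1}(x - ν_{k+1}) - μ_k (x - ν_k))/A · S S̃`,
and the linear factor is `(μ_{k+1} - μ_k)(x - ν̂)`.
-/

theorem hasDerivAt_abs_sub_rpow {a r x : ℝ} (hx : x ≠ a) :
    HasDerivAt (fun t => |t - a| ^ r) (|x - a| ^ r * (r / (x - a))) x := by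
  have hy : x - a ≠ 0 := sub_ne_zero.2 hx
  have habs : HasDerivAt (fun t => |t - a|) (SignType.sign (x - a) : ℝ) x :=
    (hasDerivAt_abs hy).comp_sub_const x a
  refine (habs.rpow_const (p := r) (Or.inl (abs_ne_zero.2 hy))).congr_deriv ?_
  rw [Real.rpow_sub_one (abs_ne_zero.2 hy)]
  field_simp
  rw [← self_mul_sign]
  ring

theorem hasDerivAt_abs_sub_rpow_mul₃ {a₁ a₂ a₃ r₁ r₂ r₃ x : ℝ}
    (h₁ : x ≠ a₁) (h₂ : x ≠ a₂) (h₃ : x ≠ a₃) :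
    HasDerivAt (fun t => |t - a₁| ^ r₁ * |t - a₂| ^ r₂ * |t - a₃| ^ r₃)
      (|x - a₁| ^ r₁ * |x - a₂| ^ r₂ * |x - a₃| ^ r₃
        * (r₁ / (x - a₁) + r₂ / (x - a₂) + r₃ / (x - a₃))) x := by
  refine (((hasDerivAt_abs_sub_rpow h₁).mul (hasDerivAt_abs_sub_rpow h₂)).mul
    (hasDerivAt_abs_sub_rpow h₃)).congr_deriv ?_
  simp only [Pi.mul_apply]
  ring

theorem HasDerivAt.weighted_wronskian {J u u' v v' : ℝ → ℝ} {x b p q u'' v'' : ℝ}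
    (hJ : HasDerivAt J (J x * b) x)
    (hu : HasDerivAt u (u' x) x) (hu' : HasDerivAt u' u'' x)
    (hv : HasDerivAt v (v' x) x) (hv' : HasDerivAt v' v'' x)
    (hu_ode : u'' + b * u' x = p * u x) (hv_ode : v'' + b * v' x = q * v x) :
    HasDerivAt (fun t => J t * (v' t * u t - v t * u' t)) (J x * (q - p) * u x * v x) x := by
  refine (hJ.mul ((hv'.mul hu).sub (hv.mul hu'))).congr_deriv ?_
  simp only [Pi.mul_apply, Pi.sub_apply]
  linear_combination (J x * u x) * hv_ode - (J x * v x) * hu_ode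

theorem stmt_8_general (a1 a2 a3 r1 r2 r3 νk νk1 : ℝ)
    (hr1 : 0 < r1) (hr2 : 0 < r2) (hr3 : 0 < r3)
    (k : ℕ)
    (μk μk1 : ℝ)
    (hμk : μk = (k : ℝ) * ((k : ℝ) - 1 + (r1 + r2 + r3)))
    (hμk1 : μk1 = ((k : ℝ) + 1) * ((k : ℝ) + (r1 + r2 + r3)))
    (S St : Polynomial ℝ)
    (hodeS : ∀ x : ℝ, x ≠ a1 → x ≠ a2 → x ≠ a3 →
      S.derivative.derivative.eval x
        + (r1 / (x - a1) + r2 / (x - a2) + r3 / (x - a3)) * S.derivative.eval x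
        = μk * (x - νk) / ((x - a1) * (x - a2) * (x - a3)) * S.eval x)
    (hodeSt : ∀ x : ℝ, x ≠ a1 → x ≠ a2 → x ≠ a3 →
      St.derivative.derivative.eval x
        + (r1 / (x - a1) + r2 / (x - a2) + r3 / (x - a3)) * St.derivative.eval x
        = μk1 * (x - νk1) / ((x - a1) * (x - a2) * (x - a3)) * St.eval x) :
    ∀ x : ℝ, x ≠ a1 → x ≠ a2 → x ≠ a3 →
      HasDerivAt (fun t : ℝ =>
          (|t - a1| ^ r1 * |t - a2| ^ r2 * |t - a3| ^ r3)
            * (St.derivative.eval t * S.eval t - St.eval t * S.derivative.eval t))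
        ((μk1 - μk)
          * ((|x - a1| ^ r1 * |x - a2| ^ r2 * |x - a3| ^ r3)
              / ((x - a1) * (x - a2) * (x - a3)))
          * (x - (μk1 * νk1 - μk * νk) / (μk1 - μk))
          * S.eval x * St.eval x) x := by
  intro x h₁ h₂ h₃
  have hA : (x - a1) * (x - a2) * (x - a3) ≠ 0 := by
    simp only [ne_eq, mul_eq_zero, sub_eq_zero, not_or]; exact ⟨⟨h₁, h₂⟩, h₃⟩
  -- `ν̂` is a genuine quotient: `μ_{k+1} - μ_k = 2k + σ > 0`.
  have hgap : μk1 - μk = 2 * k + (r1 + r2 + r3) := by rw [hμk, hμk1]; ring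
  have hgap_ne : μk1 - μk ≠ 0 := by rw [hgap]; positivity
  refine ((hasDerivAt_abs_sub_rpow_mul₃ h₁ h₂ h₃).weighted_wronskian
    (S.hasDerivAt x) (S.derivative.hasDerivAt x) (St.hasDerivAt x) (St.derivative.hasDerivAt x)
    (hodeS x h₁ h₂ h₃) (hodeSt x h₁ h₂ h₃)).congr_deriv ?_
  field_simp
  ring

/-- For Stieltjes solutions `S` (degree `k`, parameter `ν_k`) and `S̃` (degree `k+1`,
parameter `ν_{k+1}`), with `μ_k = k(k-1+σ)`, `μ_{k+1} = (k+1)(k+σ)`, `σ = ρ₁+ρ₂+ρ₃`,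
and `J(x) = ∏ |x-αⱼ|^{ρⱼ}`, one has away from the singular points
`(J(S̃'S − S̃S'))' = (μ_{k+1}−μ_k)(J/A)(x−ν̂) S S̃` where
`ν̂ = (μ_{k+1}ν_{k+1} − μ_k ν_k)/(μ_{k+1}−μ_k)`. -/
theorem stmt_8 (a1 a2 a3 r1 r2 r3 νk νk1 : ℝ)
    (h12 : a1 < a2) (h23 : a2 < a3)
    (hr1 : 0 < r1) (hr2 : 0 < r2) (hr3 : 0 < r3)
    (k : ℕ) (hk : 1 ≤ k)
    (μk μk1 : ℝ)
    (hμk : μk = (k : ℝ) * ((k : ℝ) - 1 + (r1 + r2 + r3)))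
    (hμk1 : μk1 = ((k : ℝ) + 1) * ((k : ℝ) + (r1 + r2 + r3)))
    (S St : Polynomial ℝ) (hSd : S.natDegree = k) (hStd : St.natDegree = k + 1)
    (hodeS : ∀ x : ℝ, x ≠ a1 → x ≠ a2 → x ≠ a3 →
      S.derivative.derivative.eval x
        + (r1 / (x - a1) + r2 / (x - a2) + r3 / (x - a3)) * S.derivative.eval x
        = μk * (x - νk) / ((x - a1) * (x - a2) * (x - a3)) * S.eval x)
    (hodeSt : ∀ x : ℝ, x ≠ a1 → x ≠ a2 → x ≠ a3 →
      St.derivative.derivative.eval x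
        + (r1 / (x - a1) + r2 / (x - a2) + r3 / (x - a3)) * St.derivative.eval x
        = μk1 * (x - νk1) / ((x - a1) * (x - a2) * (x - a3)) * St.eval x) :
    ∀ x : ℝ, x ≠ a1 → x ≠ a2 → x ≠ a3 →
      HasDerivAt (fun t : ℝ =>
          (|t - a1| ^ r1 * |t - a2| ^ r2 * |t - a3| ^ r3)
            * (St.derivative.eval t * S.eval t - St.eval t * S.derivative.eval t))
        ((μk1 - μk)
          * ((|x - a1| ^ r1 * |x - a2| ^ r2 * |x - a3| ^ r3)
              / ((x - a1) * (x - a2) * (x - a3)))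
          * (x - (μk1 * νk1 - μk * νk) / (μk1 - μk))
          * S.eval x * St.eval x) x :=
  stmt_8_general a1 a2 a3 r1 r2 r3 νk νk1 hr1 hr2 hr3 k μk μk1 hμk hμk1 S St hodeS hodeSt
end

section
/- Define θ(ν) = (1/π) ∫_{α_1}^{min(α_2,ν)} √(|(ν − x)/A(x)|) dx for ν ∈ [α_1, α_3], where A(x) = ∏_{j=1}^3 (x − α_j). Then θ is continuous and strictly increasing on [α_1, α_3], with θ(α_1) = 0 and θ(α_3) = 1. In particular, for every θ_0 ∈ [0,1] there is a unique ν ∈ [α_1, α_3] with θ(ν) = θ_0. -/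
/-!
Extending the integrand by zero beyond `ν` writes `π θ(ν)` as
`∫_{α₁}^{α₂} √(max(ν - x, 0) / |A x|)`, an integral over a fixed interval whose integrand is
continuous and nondecreasing in `ν`, and strictly increasing in `ν` wherever `x < ν`. At `ν = α₃`
the factor `α₃ - x` cancels and the integrand becomes `1 / √((x - α₁)(α₂ - x))`, the derivative
of `arcsin ((2x - α₁ - α₂) / (α₂ - α₁))`: it is integrable with integral `π`, which gives
`θ(α₃) = 1`, and by monotonicity it dominates the integrand for every `ν ≤ α₃`, which gives
continuity by dominated convergence.
-/

open Real Set MeasureTheory Filter intervalIntegral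

theorem hasDerivAt_arcsin_affine {a b x : ℝ} (hx : x ∈ Ioo a b) :
    HasDerivAt (fun y => arcsin ((2 * y - a - b) / (b - a))) (√((x - a) * (b - x)))⁻¹ x := by
  obtain ⟨hax, hxb⟩ := hx
  have hba : 0 < b - a := by linarith
  set u := (2 * x - a - b) / (b - a)
  have hu1 : u < 1 := by rw [div_lt_one hba]; linarith
  have hu2 : -1 < u := by rw [lt_div_iff₀ hba]; linarith
  have hlin : HasDerivAt (fun y => (2 * y - a - b) / (b - a)) (2 / (b - a)) x := by
    simpa using ((((hasDerivAt_id x).const_mul 2).sub_const a).sub_const b).div_const (b - a)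
  refine ((hasDerivAt_arcsin hu2.ne' hu1.ne).comp x hlin).congr_deriv ?_
  have hsq : 1 - u ^ 2 = (2 / (b - a)) ^ 2 * ((x - a) * (b - x)) := by
    simp only [u]; field_simp; ring
  have hpos : 0 < √((x - a) * (b - x)) := sqrt_pos.2 (mul_pos (by linarith) (by linarith))
  rw [hsq, sqrt_mul (sq_nonneg _), sqrt_sq (by positivity)]
  field_simp

theorem intervalIntegrable_inv_sqrt_mul_sub {a b : ℝ} (hab : a ≤ b) :
    IntervalIntegrable (fun x => (√((x - a) * (b - x)))⁻¹) volume a b := by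
  refine intervalIntegrable_deriv_of_nonneg (g := fun y => arcsin ((2 * y - a - b) / (b - a)))
    (by fun_prop) (fun x hx => hasDerivAt_arcsin_affine ?_) (fun _ _ => by positivity)
  simpa [hab] using hx

theorem integral_inv_sqrt_mul_sub {a b : ℝ} (hab : a < b) :
    ∫ x in a..b, (√((x - a) * (b - x)))⁻¹ = π := by
  rw [integral_eq_sub_of_hasDerivAt_of_le hab.le (by fun_prop)
    (fun x hx => hasDerivAt_arcsin_affine hx) (intervalIntegrable_inv_sqrt_mul_sub hab.le)]
  have hba : b - a ≠ 0 := by linarith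
  have h1 : (2 * b - a - b) / (b - a) = 1 := by rw [div_eq_one_iff_eq hba]; ring
  have h2 : (2 * a - a - b) / (b - a) = -1 := by rw [div_eq_iff hba]; ring
  rw [h1, h2, arcsin_one, arcsin_neg_one]
  ring

noncomputable def truncIntegrand (A : ℝ → ℝ) (ν x : ℝ) : ℝ :=
  √(max (ν - x) 0 / |A x|)

section truncIntegrand

variable {A : ℝ → ℝ} {ν ν' x : ℝ}

theorem truncIntegrand_nonneg : 0 ≤ truncIntegrand A ν x := sqrt_nonneg _

theorem truncIntegrand_of_le (hx : x ≤ ν) : truncIntegrand A ν x = √|(ν - x) / A x| := by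
  rw [truncIntegrand, max_eq_left (sub_nonneg.2 hx), abs_div, abs_of_nonneg (sub_nonneg.2 hx)]

theorem truncIntegrand_of_ge (hx : ν ≤ x) : truncIntegrand A ν x = 0 := by
  rw [truncIntegrand, max_eq_right (sub_nonpos.2 hx), zero_div, sqrt_zero]

theorem truncIntegrand_of_eq_zero (hA : A x = 0) : truncIntegrand A ν x = 0 := by
  rw [truncIntegrand, hA, abs_zero, div_zero, sqrt_zero]

theorem monotone_truncIntegrand (A : ℝ → ℝ) (x : ℝ) : Monotone (truncIntegrand A · x) :=
  fun _ _ h => sqrt_le_sqrt <| div_le_div_of_nonneg_right (max_le_max_right 0 (by linarith))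
    (abs_nonneg _)

theorem truncIntegrand_lt (hA : A x ≠ 0) (hν : ν < ν') (hx : x < ν') :
    truncIntegrand A ν x < truncIntegrand A ν' x := by
  refine sqrt_lt_sqrt (div_nonneg (le_max_right _ _) (abs_nonneg _)) ?_
  refine div_lt_div_of_pos_right ?_ (abs_pos.2 hA)
  rw [max_eq_left (by linarith : 0 ≤ ν' - x)]
  exact max_lt (by linarith) (by linarith)

theorem continuous_truncIntegrand (A : ℝ → ℝ) (x : ℝ) : Continuous (truncIntegrand A · x) := by
  unfold truncIntegrand; fun_prop

theorem measurable_truncIntegrand (hA : Measurable A) (ν : ℝ) :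
    Measurable (truncIntegrand A ν) := by
  unfold truncIntegrand; fun_prop

end truncIntegrand

section integral

variable {A : ℝ → ℝ} {a b μ ν : ℝ}

theorem intervalIntegrable_truncIntegrand_of_le (hA : Measurable A)
    (hμ : IntervalIntegrable (truncIntegrand A μ) volume a b) (hν : ν ≤ μ) :
    IntervalIntegrable (truncIntegrand A ν) volume a b :=
  hμ.mono_fun' (measurable_truncIntegrand hA ν).aestronglyMeasurable <| ae_of_all _ fun x =>
    (Real.norm_of_nonneg truncIntegrand_nonneg).trans_le (monotone_truncIntegrand A x hν)

theorem continuousOn_integral_truncIntegrand (hA : Measurable A)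
    (hμ : IntervalIntegrable (truncIntegrand A μ) volume a b) :
    ContinuousOn (fun ν => ∫ x in a..b, truncIntegrand A ν x) (Iic μ) := fun _ _ =>
  continuousWithinAt_of_dominated_interval
    (Eventually.of_forall fun ν => (measurable_truncIntegrand hA ν).aestronglyMeasurable)
    (eventually_nhdsWithin_of_forall fun _ hν => ae_of_all _ fun x _ =>
      (Real.norm_of_nonneg truncIntegrand_nonneg).trans_le (monotone_truncIntegrand A x hν))
    hμ (ae_of_all _ fun x _ => (continuous_truncIntegrand A x).continuousWithinAt)

theorem strictMonoOn_integral_truncIntegrand (hA : Measurable A)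
    (hA0 : ∀ x ∈ Ioo a b, A x ≠ 0) (hab : a < b)
    (hμ : IntervalIntegrable (truncIntegrand A μ) volume a b) :
    StrictMonoOn (fun ν => ∫ x in a..b, truncIntegrand A ν x) (Icc a μ) := by
  intro ν hν ν' hν' hlt
  refine integral_lt_integral_of_ae_le_of_measure_setOfPred_lt_ne_zero hab.le
    (intervalIntegrable_truncIntegrand_of_le hA hμ hν.2)
    (intervalIntegrable_truncIntegrand_of_le hA hμ hν'.2)
    (ae_of_all _ fun x => monotone_truncIntegrand A x hlt.le) ?_
  have hsub : Ioo a (min b ν') ⊆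
      {x | truncIntegrand A ν x < truncIntegrand A ν' x} ∩ Ioc a b := fun x hx =>
    have hxb : x < b := hx.2.trans_le (min_le_left _ _)
    ⟨truncIntegrand_lt (hA0 x ⟨hx.1, hxb⟩) hlt (hx.2.trans_le (min_le_right _ _)),
      hx.1, hxb.le⟩
  have hpos : 0 < volume (Ioo a (min b ν')) :=
    (Measure.measure_Ioo_pos _).2 (lt_min hab (hν.1.trans_lt hlt))
  rw [Measure.restrict_apply' measurableSet_Ioc]
  exact (hpos.trans_le (measure_mono hsub)).ne'

theorem integral_min_eq_integral_truncIntegrand (hAb : A b = 0) (hab : a ≤ b) (haν : a ≤ ν)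
    (hint : IntervalIntegrable (truncIntegrand A ν) volume a b) :
    ∫ x in a..min b ν, √|(ν - x) / A x| = ∫ x in a..b, truncIntegrand A ν x := by
  have ham : a ≤ min b ν := le_min hab haν
  have hmb : min b ν ≤ b := min_le_left _ _
  have hleft : ∫ x in a..min b ν, √|(ν - x) / A x| = ∫ x in a..min b ν, truncIntegrand A ν x :=
    integral_congr fun x hx => by
      rw [uIcc_of_le ham] at hx
      exact (truncIntegrand_of_le (hx.2.trans (min_le_right _ _))).symm
  have hright : ∫ x in min b ν..b, truncIntegrand A ν x = 0 := by
    rw [← integral_zero (a := min b ν) (b := b) (μ := volume)]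
    refine integral_congr fun x hx => ?_
    rw [uIcc_of_le hmb] at hx
    rcases le_or_gt ν x with hνx | hxν
    · exact truncIntegrand_of_ge hνx
    · have hxb : x = b := le_antisymm hx.2 ((min_le_iff.1 hx.1).resolve_right hxν.not_ge)
      exact truncIntegrand_of_eq_zero (hxb ▸ hAb)
  have hint_left : IntervalIntegrable (truncIntegrand A ν) volume a (min b ν) :=
    hint.mono_set (by rw [uIcc_of_le ham, uIcc_of_le hab]; exact Icc_subset_Icc_right hmb)
  have hint_right : IntervalIntegrable (truncIntegrand A ν) volume (min b ν) b :=
    hint.mono_set (by rw [uIcc_of_le hmb, uIcc_of_le hab]; exact Icc_subset_Icc_left ham)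
  rw [hleft, ← integral_add_adjacent_intervals hint_left hint_right, hright, add_zero]

end integral

theorem StrictMonoOn.existsUnique_eq_of_continuousOn {α δ : Type*}
    [ConditionallyCompleteLinearOrder α] [TopologicalSpace α] [OrderTopology α]
    [DenselyOrdered α] [LinearOrder δ] [TopologicalSpace δ] [OrderClosedTopology δ]
    {f : α → δ} {a b : α} {y : δ} (hf : StrictMonoOn f (Icc a b))
    (hc : ContinuousOn f (Icc a b)) (hab : a ≤ b) (hy : y ∈ Icc (f a) (f b)) :
    ∃! x, x ∈ Icc a b ∧ f x = y := by
  obtain ⟨x, hx, rfl⟩ := intermediate_value_Icc hab hc hy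
  exact ⟨x, ⟨hx, rfl⟩, fun x' hx' => hf.injOn hx'.1 hx hx'.2⟩

section cubic

variable {a1 a2 a3 : ℝ}

theorem truncIntegrand_cubic_self {x : ℝ} (h23 : a2 < a3) (hx : x ∈ Icc a1 a2) :
    truncIntegrand (fun y => (y - a1) * (y - a2) * (y - a3)) a3 x =
      (√((x - a1) * (a2 - x)))⁻¹ := by
  have h3 : 0 < a3 - x := by linarith [hx.2]
  have hA : |(x - a1) * (x - a2) * (x - a3)| = (x - a1) * (a2 - x) * (a3 - x) := by
    rw [show (x - a1) * (x - a2) * (x - a3) = (x - a1) * (a2 - x) * (a3 - x) by ring]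
    exact abs_of_nonneg (mul_nonneg (mul_nonneg (sub_nonneg.2 hx.1) (sub_nonneg.2 hx.2)) h3.le)
  rw [truncIntegrand, max_eq_left h3.le, hA, div_mul_cancel_right₀ h3.ne', sqrt_inv]

theorem intervalIntegrable_truncIntegrand_cubic_self (h12 : a1 ≤ a2) (h23 : a2 < a3) :
    IntervalIntegrable (truncIntegrand (fun y => (y - a1) * (y - a2) * (y - a3)) a3)
      volume a1 a2 := by
  refine (intervalIntegrable_congr fun x hx => ?_).2 (intervalIntegrable_inv_sqrt_mul_sub h12)
  rw [uIoc_of_le h12] at hx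
  exact truncIntegrand_cubic_self h23 (Ioc_subset_Icc_self hx)

theorem integral_truncIntegrand_cubic_self (h12 : a1 < a2) (h23 : a2 < a3) :
    ∫ x in a1..a2, truncIntegrand (fun y => (y - a1) * (y - a2) * (y - a3)) a3 x = π := by
  rw [← integral_inv_sqrt_mul_sub h12]
  refine integral_congr fun x hx => ?_
  rw [uIcc_of_le h12.le] at hx
  exact truncIntegrand_cubic_self h23 hx

end cubic

/-- The map `θ(ν) = (1/π) ∫_{α₁}^{min(α₂,ν)} √|(ν−x)/A(x)| dx` is continuous and
strictly increasing on `[α₁, α₃]`, with `θ(α₁) = 0` and `θ(α₃) = 1`; in particular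
every `θ₀ ∈ [0,1]` is attained at a unique `ν ∈ [α₁, α₃]`. -/
theorem stmt_11 (a1 a2 a3 : ℝ) (h12 : a1 < a2) (h23 : a2 < a3)
    (θ : ℝ → ℝ)
    (hθ : ∀ ν : ℝ, θ ν = (1 / π) * ∫ x in a1..(min a2 ν),
        Real.sqrt |(ν - x) / ((x - a1) * (x - a2) * (x - a3))|) :
    ContinuousOn θ (Icc a1 a3) ∧ StrictMonoOn θ (Icc a1 a3) ∧
      θ a1 = 0 ∧ θ a3 = 1 ∧
      ∀ θ0 ∈ Icc (0 : ℝ) 1, ∃! ν, ν ∈ Icc a1 a3 ∧ θ ν = θ0 := by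
  set A : ℝ → ℝ := fun x => (x - a1) * (x - a2) * (x - a3)
  have hA : Measurable A := by fun_prop
  have hA0 : ∀ x ∈ Ioo a1 a2, A x ≠ 0 := fun x hx =>
    mul_ne_zero (mul_ne_zero (by linarith [hx.1]) (by linarith [hx.2])) (by linarith [hx.2])
  have hint : IntervalIntegrable (truncIntegrand A a3) volume a1 a2 :=
    intervalIntegrable_truncIntegrand_cubic_self h12.le h23
  have hθ_eq : EqOn θ (fun ν => π⁻¹ * ∫ x in a1..a2, truncIntegrand A ν x) (Icc a1 a3) :=
    fun ν hν => by
      rw [hθ, one_div, integral_min_eq_integral_truncIntegrand (by simp [A]) h12.le hν.1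
        (intervalIntegrable_truncIntegrand_of_le hA hint hν.2)]
  have hcont : ContinuousOn θ (Icc a1 a3) :=
    (((continuousOn_integral_truncIntegrand hA hint).mono Icc_subset_Iic_self).const_smul
      π⁻¹).congr hθ_eq
  have hmono : StrictMonoOn θ (Icc a1 a3) := fun ν hν ν' hν' hlt => by
    rw [hθ_eq hν, hθ_eq hν']
    exact mul_lt_mul_of_pos_left
      (strictMonoOn_integral_truncIntegrand hA hA0 h12 hint hν hν' hlt) (inv_pos.2 pi_pos)
  have hθ1 : θ a1 = 0 := by rw [hθ, min_eq_right h12.le, integral_same, mul_zero]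
  have hθ3 : θ a3 = 1 := by
    have hπ : ∫ x in a1..a2, truncIntegrand A a3 x = π :=
      integral_truncIntegrand_cubic_self h12 h23
    rw [hθ_eq ⟨(h12.trans h23).le, le_rfl⟩]
    simp only [hπ, inv_mul_cancel₀ pi_ne_zero]
  refine ⟨hcont, hmono, hθ1, hθ3, fun θ0 hθ0 => ?_⟩
  exact hmono.existsUnique_eq_of_continuousOn hcont (h12.trans h23).le (by rwa [hθ1, hθ3])
end

section
/- Let f be a degree-k polynomial and g a degree-(k+1) polynomial, both with all zeros simple and contained in (α_1,α_2) ∪ (α_2,α_3), such that: g has exactly j−1 zeros in (α_1,α_2) and f has exactly j−1 zeros in (α_1,α_2); between any two consecutive zeros of g in (α_1,α_2) there is a zero of f, and between the largest zero of g in (α_1,α_2) and α_2 there is a zero of f; between any two consecutive zeros of f in (α_1,α_2) (restricted below some point) there is a zero of g and between α_1 and the smallest zero of f there is a zero of g; and between any two consecutive zeros of f in (α_2,α_3) and between each extreme zero of f in (α_2,α_3) and the endpoints α_2, α_3 there is a zero of g. Then the zeros of f and g strictly interlace: y_1 < x_1 < y_2 < … < x_k < y_{k+1}, where x_i are the zeros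 of f and y_i of g in increasing order. -/
/-! The numbers `α₁ < x₁ < ⋯ < x_k < α₃` cut `(α₁, α₃)` into `k + 1` open gaps, none of which
contains a zero of `f`. The separation hypotheses on `f` put a zero of `g` in every gap; for the
last gap when `f` has no zero in `(α₂, α₃)` one uses instead that `g` has only `j - 1 ≤ k` of its
`k + 1` zeros in `(α₁, α₂)`. Since `g` has exactly `k + 1` zeros, choosing one in each gap gives a
strictly monotone self-map of `Fin (k + 1)`, i.e. the identity: the `i`-th zero of `g` lies in the
`i`-th gap, which is the interlacing. -/

open Polynomial Set

theorem Fin.strictMono_snoc {α : Type*} [Preorder α] {n : ℕ} {f : Fin n → α} {a : α} :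
    StrictMono (Fin.snoc f a : Fin (n + 1) → α) ↔ StrictMono f ∧ ∀ j, f j < a := by
  simpa [Fin.insertNth_last', Fin.castSucc_lt_last] using
    Fin.strictMono_insertNth_iff (Fin.last n) a f

theorem StrictMono.cons_snoc {α : Type*} [Preorder α] {n : ℕ} {x : Fin n → α}
    (hx : StrictMono x) {a b : α} (hab : a < b) (hx_mem : ∀ i, x i ∈ Ioo a b) :
    StrictMono (Fin.cons a (Fin.snoc x b) : Fin (n + 2) → α) :=
  Fin.strictMono_cons.2 ⟨Fin.lastCases (by simpa using hab) (by simpa using fun i => (hx_mem i).1),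
    Fin.strictMono_snoc.2 ⟨hx, fun i => (hx_mem i).2⟩⟩

theorem StrictMono.apply_notMem_Ioo_castSucc_succ {α : Type*} [Preorder α] {n : ℕ}
    {c : Fin (n + 1) → α} (hc : StrictMono c) (i : Fin n) (l : Fin (n + 1)) :
    c l ∉ Ioo (c i.castSucc) (c i.succ) := by
  rintro ⟨h₁, h₂⟩
  exact (hc.lt_iff_lt.1 h₂).not_ge (Fin.castSucc_lt_iff_succ_le.1 (hc.lt_iff_lt.1 h₁))

theorem StrictMono.mem_Ioo_of_forall_exists_mem_Ioo {α : Type*} [LinearOrder α] {n : ℕ}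
    {z : Fin n → α} (hz : StrictMono z) {c : Fin (n + 1) → α}
    (h : ∀ i : Fin n, ∃ l, z l ∈ Ioo (c i.castSucc) (c i.succ)) (i : Fin n) :
    z i ∈ Ioo (c i.castSucc) (c i.succ) := by
  choose σ hσ using h
  have hσ_mono : StrictMono σ := by
    cases n with
    | zero => exact fun i => Fin.elim0 i
    | succ n =>
      refine Fin.strictMono_iff_lt_succ.2 fun i => hz.lt_iff_lt.1 ?_
      calc z (σ i.castSucc) < c i.castSucc.succ := (hσ _).2
        _ = c i.succ.castSucc := by rw [Fin.succ_castSucc]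
        _ < z (σ i.succ) := (hσ _).1
  simpa [hσ_mono.apply_eq] using hσ i

theorem exists_mem_Ioo_of_adjacent {α : Type*} [LinearOrder α] {P Q : α → Prop}
    {a₁ a₂ a₃ : α} (h₁₂ : a₁ < a₂) (h₂₃ : a₂ < a₃)
    (hP : ∀ t, P t → t ∈ Ioo a₁ a₂ ∪ Ioo a₂ a₃) (hQ : ∃ w ∈ Ioo a₂ a₃, Q w)
    (hconsec_left : ∀ u v, P u → P v → u ∈ Ioo a₁ a₂ → v ∈ Ioo a₁ a₂ → u < v →
      (∀ t ∈ Ioo u v, ¬ P t) → ∃ w ∈ Ioo u v, Q w)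
    (hbot_left : ∀ u, P u → u ∈ Ioo a₁ a₂ → (∀ t, P t → t ∈ Ioo a₁ a₂ → u ≤ t) →
      ∃ w ∈ Ioo a₁ u, Q w)
    (hconsec_right : ∀ u v, P u → P v → u ∈ Ioo a₂ a₃ → v ∈ Ioo a₂ a₃ → u < v →
      (∀ t ∈ Ioo u v, ¬ P t) → ∃ w ∈ Ioo u v, Q w)
    (hbot_right : ∀ u, P u → u ∈ Ioo a₂ a₃ → (∀ t, P t → t ∈ Ioo a₂ a₃ → u ≤ t) →
      ∃ w ∈ Ioo a₂ u, Q w)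
    (htop_right : ∀ u, P u → u ∈ Ioo a₂ a₃ → (∀ t, P t → t ∈ Ioo a₂ a₃ → t ≤ u) →
      ∃ w ∈ Ioo u a₃, Q w)
    {u v : α} (huv : u < v) (hu : u = a₁ ∨ u = a₃ ∨ P u) (hv : v = a₁ ∨ v = a₃ ∨ P v)
    (hgap : ∀ t ∈ Ioo u v, ¬ P t) :
    ∃ w ∈ Ioo u v, Q w := by
  have v_le {a b : α} (hP_ab : ∀ t, P t → t ∈ Ioo a b → u < t) (t : α) (ht : P t)
      (htab : t ∈ Ioo a b) : v ≤ t :=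
    not_lt.1 fun htv => hgap t ⟨hP_ab t ht htab, htv⟩ ht
  have shrink {a : α} (hua : u ≤ a) : (∃ w ∈ Ioo a v, Q w) → ∃ w ∈ Ioo u v, Q w :=
    fun ⟨w, hw, hQw⟩ => ⟨w, ⟨hua.trans_lt hw.1, hw.2⟩, hQw⟩
  have hP₁₃ : ∀ t, P t → a₁ < t ∧ t < a₃ := by
    intro t ht
    rcases hP t ht with h | h
    exacts [⟨h.1, h.2.trans h₂₃⟩, ⟨h₁₂.trans h.1, h.2⟩]
  replace hu : u = a₁ ∨ P u := by
    rcases hu with rfl | rfl | hu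
    · exact .inl rfl
    · rcases hv with rfl | rfl | hv
      exacts [absurd huv (h₁₂.trans h₂₃).not_gt, absurd huv (lt_irrefl _),
        absurd huv (hP₁₃ v hv).2.not_gt]
    · exact .inr hu
  have hu₂ : u < a₂ ∨ P u ∧ u ∈ Ioo a₂ a₃ := by
    rcases hu with rfl | hu
    exacts [.inl h₁₂, (hP u hu).imp (·.2) (⟨hu, ·⟩)]
  rcases hv with rfl | rfl | hv
  · rcases hu with rfl | hu
    exacts [absurd huv (lt_irrefl _), absurd huv (hP₁₃ u hu).1.not_gt]
  · rcases hu₂ with hu₂ | hu₂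
    · exact shrink hu₂.le hQ
    · exact htop_right u hu₂.1 hu₂.2 fun t ht htr =>
        not_lt.1 fun hut => hgap t ⟨hut, htr.2⟩ ht
  rcases hP v hv with hvl | hvr
  · rcases hu with rfl | hu
    · exact hbot_left v hv hvl (v_le fun t _ ht => ht.1)
    · have hul : u ∈ Ioo a₁ a₂ :=
        (hP u hu).resolve_right fun h => (h.1.trans (huv.trans hvl.2)).false
      exact hconsec_left u v hu hv hul hvl huv hgap
  · rcases hu₂ with hu₂ | ⟨hu, hur⟩
    · exact shrink hu₂.le (hbot_right v hv hvr (v_le fun t _ ht => hu₂.trans ht.1))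
    · exact hconsec_right u v hu hv hur hvr huv hgap

theorem Fin.last_mem_Ioo_of_card_filter_le {α : Type*} [LinearOrder α] {n : ℕ}
    {y : Fin (n + 1) → α} (hy : Monotone y) {a b c : α}
    (hloc : ∀ i, y i ∈ Ioo a b ∪ Ioo b c)
    (hcard : (Finset.univ.filter (fun i => y i ∈ Ioo a b)).card ≤ n) :
    y (Fin.last n) ∈ Ioo b c := by
  refine (hloc _).resolve_left fun hlast => ?_
  have hall : ∀ i, y i ∈ Ioo a b := fun i => (hloc i).resolve_right fun h =>
    (h.1.trans_le (hy (Fin.le_last i))).not_gt hlast.2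
  simp [hall] at hcard

theorem stmt_16_general (a1 a2 a3 : ℝ) (h12 : a1 < a2) (h23 : a2 < a3)
    (k j : ℕ) (hjk : j ≤ k + 1)
    (f g : Polynomial ℝ)
    (x : Fin k → ℝ) (y : Fin (k + 1) → ℝ) (hx : StrictMono x) (hy : StrictMono y)
    (hxz : ∀ i, f.eval (x i) = 0) (hxall : ∀ t : ℝ, f.eval t = 0 → ∃ i, t = x i)
    (hyz : ∀ i, g.eval (y i) = 0) (hyall : ∀ t : ℝ, g.eval t = 0 → ∃ i, t = y i)
    (hxloc : ∀ i, x i ∈ Ioo a1 a2 ∪ Ioo a2 a3)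
    (hyloc : ∀ i, y i ∈ Ioo a1 a2 ∪ Ioo a2 a3)
    -- zero counts in (α₁,α₂): j−1 for each of f and g
    (hcy : (Finset.univ.filter (fun i => y i ∈ Ioo a1 a2)).card = j - 1)
    -- between consecutive zeros of f in (α₁,α₂) there is a zero of g
    (hf_consec_left : ∀ u v : ℝ, f.eval u = 0 → f.eval v = 0 → u ∈ Ioo a1 a2 →
      v ∈ Ioo a1 a2 → u < v → (∀ t ∈ Ioo u v, f.eval t ≠ 0) →
      ∃ w ∈ Ioo u v, g.eval w = 0)
    -- between α₁ and the smallest zero of f in (α₁,α₂) there is a zero of g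
    (hf_bot_left : ∀ u : ℝ, f.eval u = 0 → u ∈ Ioo a1 a2 →
      (∀ t : ℝ, f.eval t = 0 → t ∈ Ioo a1 a2 → u ≤ t) →
      ∃ w ∈ Ioo a1 u, g.eval w = 0)
    -- between consecutive zeros of f in (α₂,α₃) there is a zero of g
    (hf_consec_right : ∀ u v : ℝ, f.eval u = 0 → f.eval v = 0 → u ∈ Ioo a2 a3 →
      v ∈ Ioo a2 a3 → u < v → (∀ t ∈ Ioo u v, f.eval t ≠ 0) →
      ∃ w ∈ Ioo u v, g.eval w = 0)
    -- between α₂ and the smallest zero of f in (α₂,α₃) there is a zero of g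
    (hf_bot_right : ∀ u : ℝ, f.eval u = 0 → u ∈ Ioo a2 a3 →
      (∀ t : ℝ, f.eval t = 0 → t ∈ Ioo a2 a3 → u ≤ t) →
      ∃ w ∈ Ioo a2 u, g.eval w = 0)
    -- between the largest zero of f in (α₂,α₃) and α₃ there is a zero of g
    (hf_top_right : ∀ u : ℝ, f.eval u = 0 → u ∈ Ioo a2 a3 →
      (∀ t : ℝ, f.eval t = 0 → t ∈ Ioo a2 a3 → t ≤ u) →
      ∃ w ∈ Ioo u a3, g.eval w = 0) :
    ∀ i : Fin k, y i.castSucc < x i ∧ x i < y i.succ := by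
  have hx_mem (i : Fin k) : x i ∈ Ioo a1 a3 :=
    union_subset (Ioo_subset_Ioo_right h23.le) (Ioo_subset_Ioo_left h12.le) (hxloc i)
  set c : Fin (k + 2) → ℝ := Fin.cons a1 (Fin.snoc x a3)
  have hc : StrictMono c := hx.cons_snoc (h12.trans h23) hx_mem
  have hc_range (i : Fin (k + 2)) : c i = a1 ∨ c i = a3 ∨ f.eval (c i) = 0 := by
    obtain h | h | ⟨l, hl⟩ : c i = a1 ∨ c i = a3 ∨ ∃ l, x l = c i := by
      simpa [c] using mem_range_self (f := c) i
    exacts [.inl h, .inr (.inl h), .inr (.inr (hl ▸ hxz l))]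
  have hg_right : ∃ w ∈ Ioo a2 a3, g.eval w = 0 :=
    ⟨y (Fin.last k), Fin.last_mem_Ioo_of_card_filter_le hy.monotone hyloc
      (hcy.trans_le (Nat.sub_le_iff_le_add.2 hjk)), hyz _⟩
  have hgap (i : Fin (k + 1)) : ∃ l, y l ∈ Ioo (c i.castSucc) (c i.succ) := by
    have hf_ne (t : ℝ) (ht : t ∈ Ioo (c i.castSucc) (c i.succ)) : f.eval t ≠ 0 := fun hft => by
      obtain ⟨l, rfl⟩ := hxall t hft
      exact hc.apply_notMem_Ioo_castSucc_succ i l.castSucc.succ (by simpa [c] using ht)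
    obtain ⟨w, hw, hgw⟩ := exists_mem_Ioo_of_adjacent (P := (f.eval · = 0))
      (Q := (g.eval · = 0)) h12 h23 (fun t ht => by obtain ⟨l, rfl⟩ := hxall t ht; exact hxloc l)
      hg_right hf_consec_left hf_bot_left hf_consec_right hf_bot_right hf_top_right
      (hc i.castSucc_lt_succ) (hc_range _) (hc_range _) hf_ne
    obtain ⟨l, rfl⟩ := hyall w hgw
    exact ⟨l, hw⟩
  have hy_mem := hy.mem_Ioo_of_forall_exists_mem_Ioo hgap
  exact fun i => ⟨by simpa [c] using (hy_mem i.castSucc).2,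
    by simpa [c, ← Fin.succ_castSucc] using (hy_mem i.succ).1⟩

/-- Zero-counting step for Theorem 3: if `f` (degree `k`) and `g` (degree `k+1`) both
have `j−1` simple zeros in `(α₁,α₂)` and the remaining zeros in `(α₂,α₃)`, with the
stated separation properties, then their zeros strictly interlace:
`y₁ < x₁ < y₂ < ⋯ < x_k < y_{k+1}`. -/
theorem stmt_16 (a1 a2 a3 : ℝ) (h12 : a1 < a2) (h23 : a2 < a3)
    (k j : ℕ) (hj : 1 ≤ j) (hjk : j ≤ k + 1)
    (f g : Polynomial ℝ) (hfd : f.natDegree = k) (hgd : g.natDegree = k + 1)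
    (x : Fin k → ℝ) (y : Fin (k + 1) → ℝ) (hx : StrictMono x) (hy : StrictMono y)
    (hxz : ∀ i, f.eval (x i) = 0) (hxall : ∀ t : ℝ, f.eval t = 0 → ∃ i, t = x i)
    (hyz : ∀ i, g.eval (y i) = 0) (hyall : ∀ t : ℝ, g.eval t = 0 → ∃ i, t = y i)
    (hxloc : ∀ i, x i ∈ Ioo a1 a2 ∪ Ioo a2 a3)
    (hyloc : ∀ i, y i ∈ Ioo a1 a2 ∪ Ioo a2 a3)
    -- zero counts in (α₁,α₂): j−1 for each of f and g
    (hcx : (Finset.univ.filter (fun i => x i ∈ Ioo a1 a2)).card = j - 1)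
    (hcy : (Finset.univ.filter (fun i => y i ∈ Ioo a1 a2)).card = j - 1)
    -- between consecutive zeros of g in (α₁,α₂) there is a zero of f
    (hg_consec_left : ∀ u v : ℝ, g.eval u = 0 → g.eval v = 0 → u ∈ Ioo a1 a2 →
      v ∈ Ioo a1 a2 → u < v → (∀ t ∈ Ioo u v, g.eval t ≠ 0) →
      ∃ w ∈ Ioo u v, f.eval w = 0)
    -- between the largest zero of g in (α₁,α₂) and α₂ there is a zero of f
    (hg_top_left : ∀ u : ℝ, g.eval u = 0 → u ∈ Ioo a1 a2 →
      (∀ t : ℝ, g.eval t = 0 → t ∈ Ioo a1 a2 → t ≤ u) →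
      ∃ w ∈ Ioo u a2, f.eval w = 0)
    -- between consecutive zeros of f in (α₁,α₂) there is a zero of g
    (hf_consec_left : ∀ u v : ℝ, f.eval u = 0 → f.eval v = 0 → u ∈ Ioo a1 a2 →
      v ∈ Ioo a1 a2 → u < v → (∀ t ∈ Ioo u v, f.eval t ≠ 0) →
      ∃ w ∈ Ioo u v, g.eval w = 0)
    -- between α₁ and the smallest zero of f in (α₁,α₂) there is a zero of g
    (hf_bot_left : ∀ u : ℝ, f.eval u = 0 → u ∈ Ioo a1 a2 →
      (∀ t : ℝ, f.eval t = 0 → t ∈ Ioo a1 a2 → u ≤ t) →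
      ∃ w ∈ Ioo a1 u, g.eval w = 0)
    -- between consecutive zeros of f in (α₂,α₃) there is a zero of g
    (hf_consec_right : ∀ u v : ℝ, f.eval u = 0 → f.eval v = 0 → u ∈ Ioo a2 a3 →
      v ∈ Ioo a2 a3 → u < v → (∀ t ∈ Ioo u v, f.eval t ≠ 0) →
      ∃ w ∈ Ioo u v, g.eval w = 0)
    -- between α₂ and the smallest zero of f in (α₂,α₃) there is a zero of g
    (hf_bot_right : ∀ u : ℝ, f.eval u = 0 → u ∈ Ioo a2 a3 →
      (∀ t : ℝ, f.eval t = 0 → t ∈ Ioo a2 a3 → u ≤ t) →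
      ∃ w ∈ Ioo a2 u, g.eval w = 0)
    -- between the largest zero of f in (α₂,α₃) and α₃ there is a zero of g
    (hf_top_right : ∀ u : ℝ, f.eval u = 0 → u ∈ Ioo a2 a3 →
      (∀ t : ℝ, f.eval t = 0 → t ∈ Ioo a2 a3 → t ≤ u) →
      ∃ w ∈ Ioo u a3, g.eval w = 0) :
    ∀ i : Fin k, y i.castSucc < x i ∧ x i < y i.succ :=
  stmt_16_general a1 a2 a3 h12 h23 k j hjk f g x y hx hy hxz hxall hyz hyall hxloc hyloc hcy
    hf_consec_left hf_bot_left hf_consec_right hf_bot_right hf_top_right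
end
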